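/- Let G be a finite group in which every Sylow subgroup is k-submodular, and let U be a subgroup of G. Then every Sylow subgroup of U is k-submodular in U. -/

import Mathlib

open Pointwise

/-- A subgroup `H` of `K` is `n`-modularly embedded in `K` if either `H ◁ K`, or
`K/Core_K(H)` is a non-nilpotent group of order `p * q ^ n` with `|K : H| = p`
for some primes `p`, `q`. -/
def ModularlyEmbedded {G : Type*} [Group G] (n : ℕ) (H K : Subgroup G) : Prop :=
  H ≤ K ∧ ((H.subgroupOf K).Normal ∨
    ∃ p q : ℕ, p.Prime ∧ q.Prime ∧
      ¬ Group.IsNilpotent (↥K ⧸ (H.subgroupOf K).normalCore) ∧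
      Nat.card (↥K ⧸ (H.subgroupOf K).normalCore) = p * q ^ n ∧
      (H.subgroupOf K).index = p)

/-- `H` is `k`-submodular in `K` if there is a chain `H = H_0 ≤ H_1 ≤ ⋯ ≤ H_m = K`
such that `H_{i-1}` is `n_i`-modularly embedded in `H_i` for some natural number
`n_i ≤ k`, for every `i`. -/
def KSubmodularIn {G : Type*} [Group G] (k : ℕ) (H K : Subgroup G) : Prop :=
  ∃ (m : ℕ) (c : ℕ → Subgroup G), c 0 = H ∧ c m = K ∧
    ∀ i < m, ∃ n : ℕ, 0 < n ∧ n ≤ k ∧ ModularlyEmbedded n (c i) (c (i + 1))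

section Aux

variable {G : Type*} [Group G]

theorem KSub.refl (k : ℕ) (A : Subgroup G) : KSubmodularIn k A A :=
  ⟨0, fun _ => A, rfl, rfl, fun i hi => absurd hi (Nat.not_lt_zero i)⟩

theorem KSub.trans {k : ℕ} {A B C : Subgroup G} (h1 : KSubmodularIn k A B)
    (h2 : KSubmodularIn k B C) : KSubmodularIn k A C := by
  obtain ⟨m1, c1, hc10, hc11, hs1⟩ := h1
  obtain ⟨m2, c2, hc20, hc21, hs2⟩ := h2
  refine ⟨m1 + m2, fun i => if i ≤ m1 then c1 i else c2 (i - m1), by simpa, ?_, ?_⟩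
  · rcases Nat.eq_zero_or_pos m2 with h0 | h0
    · subst h0
      simpa using hc11.trans (hc20.symm.trans hc21)
    · have hne : ¬ (m1 + m2 ≤ m1) := by omega
      simp only [hne, if_false]
      rw [Nat.add_sub_cancel_left]
      exact hc21
  · intro i hi
    by_cases h1i : i + 1 ≤ m1
    · have e1 : i ≤ m1 := by omega
      obtain ⟨n, hn0, hnk, hme⟩ := hs1 i (by omega)
      exact ⟨n, hn0, hnk, by simpa [e1, h1i] using hme⟩
    · by_cases h2i : i ≤ m1
      · have hi0 : i = m1 := by omega
        obtain ⟨n, hn0, hnk, hme⟩ := hs2 0 (by omega)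
        refine ⟨n, hn0, hnk, ?_⟩
        simp only [h2i, if_true, h1i, if_false]
        subst hi0
        rw [Nat.add_sub_cancel_left, hc11, ← hc20]
        exact hme
      · obtain ⟨n, hn0, hnk, hme⟩ := hs2 (i - m1) (by omega)
        refine ⟨n, hn0, hnk, ?_⟩
        simp only [h2i, if_false, h1i, if_false]
        have e : i + 1 - m1 = (i - m1) + 1 := by omega
        rw [e]
        exact hme

theorem KSub.single {k n : ℕ} {A B : Subgroup G} (h0 : 0 < n) (hnk : n ≤ k)
    (h : ModularlyEmbedded n A B) : KSubmodularIn k A B := by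
  refine ⟨1, fun i => if i = 0 then A else B, by simp, by simp, ?_⟩
  intro i hi
  interval_cases i
  exact ⟨n, h0, hnk, by simpa using h⟩

theorem KSub.of_normal {k : ℕ} (hk : 0 < k) {A B : Subgroup G} (hAB : A ≤ B)
    (hn : (A.subgroupOf B).Normal) : KSubmodularIn k A B :=
  KSub.single hk le_rfl ⟨hAB, Or.inl hn⟩

theorem KSub.card_lt [Finite G] {A B : Subgroup G} (h : A < B) :
    Nat.card ↥A < Nat.card ↥B := by
  have hs : (A : Set G) ⊂ (B : Set G) := by
    rw [Set.ssubset_iff_subset_ne]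
    refine ⟨h.le, ?_⟩
    intro he
    exact h.ne (SetLike.ext' he)
  have := Set.ncard_lt_ncard hs (Set.toFinite _)
  rwa [← Nat.card_coe_set_eq, ← Nat.card_coe_set_eq] at this

theorem KSub.of_nilpotent_core [Finite G] {k : ℕ} (hk : 0 < k) :
    ∀ (d : ℕ) (A B : Subgroup G), Nat.card ↥B - Nat.card ↥A ≤ d → A ≤ B →
      Group.IsNilpotent (↥B ⧸ (A.subgroupOf B).normalCore) → KSubmodularIn k A B := by
  intro d
  induction d with
  | zero =>
    intro A B hd hAB _
    rcases hAB.lt_or_eq with hlt | rfl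
    · exact absurd (KSub.card_lt hlt) (by omega)
    · exact KSub.refl k A
  | succ d ih =>
    intro A B hd hAB hnil
    rcases hAB.lt_or_eq with hlt | rfl
    swap
    · exact KSub.refl k A
    set S := A.subgroupOf B with hSdef
    set C := S.normalCore with hCdef
    have hCS : C ≤ S := S.normalCore_le
    have hSne : S ≠ ⊤ := by
      intro htop
      apply hlt.ne
      refine le_antisymm hAB ?_
      intro x hx
      have hx' : (⟨x, hx⟩ : ↥B) ∈ S := htop ▸ Subgroup.mem_top _
      exact Subgroup.mem_subgroupOf.mp hx'
    set π := QuotientGroup.mk' C with hπ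
    have hπsurj : Function.Surjective π := QuotientGroup.mk'_surjective C
    have hcomapmap : (S.map π).comap π = S := by
      rw [Subgroup.comap_map_eq, QuotientGroup.ker_mk']
      exact sup_eq_left.mpr hCS
    have hmapne : S.map π ≠ ⊤ := by
      intro htop
      apply hSne
      have h' := congrArg (Subgroup.comap π) htop
      rwa [hcomapmap, Subgroup.comap_top] at h'
    have hNC : NormalizerCondition (↥B ⧸ C) := @normalizerCondition_of_isNilpotent _ _ hnil
    have hltN : S.map π < Subgroup.normalizer (S.map π : Set (↥B ⧸ C)) := hNC _ (lt_top_iff_ne_top.mpr hmapne)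
    set T0 := (Subgroup.normalizer (S.map π : Set (↥B ⧸ C))).comap π with hT0
    have hSleT0 : S ≤ T0 := by
      calc S = (S.map π).comap π := hcomapmap.symm
      _ ≤ T0 := Subgroup.comap_mono Subgroup.le_normalizer
    have hSneT0 : S ≠ T0 := by
      intro he
      have hmapT0 : T0.map π = Subgroup.normalizer (S.map π : Set (↥B ⧸ C)) :=
        Subgroup.map_comap_eq_self_of_surjective hπsurj _
      rw [← he] at hmapT0
      exact hltN.ne hmapT0
    have hSltT0 : S < T0 := lt_of_le_of_ne hSleT0 hSneT0
    have hconj : ∀ t ∈ T0, ∀ s ∈ S, t * s * t⁻¹ ∈ S := by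
      intro t ht s hs
      have h1 : π t ∈ Subgroup.normalizer (S.map π : Set (↥B ⧸ C)) := ht
      have h2 : π t * π s * (π t)⁻¹ ∈ S.map π :=
        (Subgroup.mem_normalizer_iff.mp h1 (π s)).mp (Subgroup.mem_map_of_mem π hs)
      have h3 : π (t * s * t⁻¹) ∈ S.map π := by simpa [map_mul, map_inv] using h2
      have h4 : t * s * t⁻¹ ∈ (S.map π).comap π := h3
      rwa [hcomapmap] at h4
    set T := T0.map B.subtype with hT
    have hTB : T ≤ B := Subgroup.map_subtype_le T0
    have hAT : A ≤ T := by
      intro x hx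
      exact ⟨⟨x, hAB hx⟩, hSleT0 (Subgroup.mem_subgroupOf.mpr hx), rfl⟩
    have hTsub : T.subgroupOf B = T0 := by
      ext x
      simp only [Subgroup.mem_subgroupOf, hT, Subgroup.mem_map, Subgroup.coe_subtype]
      constructor
      · rintro ⟨y, hy, hxy⟩
        rwa [show y = x from Subtype.ext hxy] at hy
      · intro hx
        exact ⟨x, hx, rfl⟩
    have hAne : A ≠ T := by
      intro he
      apply hSneT0
      rw [hSdef, he, hTsub]
    have hAltT : A < T := lt_of_le_of_ne hAT hAne
    have hnormal : (A.subgroupOf T).Normal := by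
      refine ⟨?_⟩
      intro m hmA g
      rw [Subgroup.mem_subgroupOf] at hmA ⊢
      obtain ⟨t0, ht0, hteq⟩ := Subgroup.mem_map.mp g.2
      have h5 := Subgroup.mem_subgroupOf.mp
        (hconj t0 ht0 ⟨(m : G), hAB hmA⟩ (Subgroup.mem_subgroupOf.mpr hmA))
      simp only [Subgroup.coe_mul, Subgroup.coe_inv] at h5 ⊢
      simp only [Subgroup.coe_subtype] at hteq
      rw [hteq] at h5
      exact h5
    have step1 : KSubmodularIn k A T := KSub.of_normal hk hAT hnormal
    have hCle : C ≤ (T.subgroupOf B).normalCore := by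
      rw [hTsub]
      exact Subgroup.normal_le_normalCore.mpr (hCS.trans hSltT0.le)
    have hnil' : Group.IsNilpotent (↥B ⧸ (T.subgroupOf B).normalCore) := by
      haveI := hnil
      refine nilpotent_of_surjective
        (QuotientGroup.map C ((T.subgroupOf B).normalCore) (MonoidHom.id _)
          (by simpa using hCle)) ?_
      intro x
      obtain ⟨y, rfl⟩ := QuotientGroup.mk'_surjective _ x
      exact ⟨QuotientGroup.mk y, by simp [QuotientGroup.map_mk]⟩
    have hcardlt : Nat.card ↥A < Nat.card ↥T := KSub.card_lt hAltT
    have hTcard : Nat.card ↥T ≤ Nat.card ↥B :=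
      Nat.le_of_dvd Nat.card_pos (Subgroup.card_dvd_of_le hTB)
    exact KSub.trans step1 (ih T B (by omega) hTB hnil')

theorem KSub.dvd_decomp {p q m n : ℕ} (hp : p.Prime) (hq : q.Prime)
    (h : m ∣ p * q ^ n) : ∃ b ≤ n, m = q ^ b ∨ m = p * q ^ b := by
  by_cases hpm : p ∣ m
  · obtain ⟨m', rfl⟩ := hpm
    have hm' : m' ∣ q ^ n := (Nat.mul_dvd_mul_iff_left hp.pos).mp h
    obtain ⟨b, hb, rfl⟩ := (Nat.dvd_prime_pow hq).mp hm'
    exact ⟨b, hb, Or.inr rfl⟩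
  · have hcop : Nat.Coprime p m := hp.coprime_iff_not_dvd.mpr hpm
    have hm : m ∣ q ^ n := (Nat.Coprime.dvd_of_dvd_mul_left hcop.symm) h
    obtain ⟨b, hb, rfl⟩ := (Nat.dvd_prime_pow hq).mp hm
    exact ⟨b, hb, Or.inl rfl⟩

theorem KSub.me_comap {G G' : Type*} [Group G] [Group G'] [Finite G] [Finite G']
    {k n : ℕ} (hn : 0 < n) (hnk : n ≤ k) (f : G' →* G) (hf : Function.Injective f)
    {H K : Subgroup G} (h : ModularlyEmbedded n H K) :
    KSubmodularIn k (H.comap f) (K.comap f) := by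
  obtain ⟨hHK, hcase⟩ := h
  have hk : 0 < k := lt_of_lt_of_le hn hnk
  have hHK' : H.comap f ≤ K.comap f := Subgroup.comap_mono hHK
  rcases hcase with hnorm | ⟨p, q, hp, hq, hnonnil, hcard, hindex⟩
  · refine KSub.of_normal hk hHK' ⟨?_⟩
    intro m hm g
    rw [Subgroup.mem_subgroupOf] at hm ⊢
    rw [Subgroup.mem_comap] at hm ⊢
    have hmemK : f (↑m : G') ∈ K := m.2
    have hgK : f (↑g : G') ∈ K := g.2
    have h6 := Subgroup.mem_subgroupOf.mp
      (hnorm.conj_mem ⟨f ↑m, hmemK⟩ (Subgroup.mem_subgroupOf.mpr hm) ⟨f ↑g, hgK⟩)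
    simp only [Subgroup.coe_mul, Subgroup.coe_inv] at h6
    simpa [map_mul, map_inv] using h6
  · by_cases hnn : Group.IsNilpotent
      (↥(K.comap f) ⧸ ((H.comap f).subgroupOf (K.comap f)).normalCore)
    · exact KSub.of_nilpotent_core hk _ _ _ le_rfl hHK' hnn
    · set φ : ↥(K.comap f) →* ↥K := f.subgroupComap K with hφdef
      set ψ : ↥(K.comap f) →* ↥K ⧸ (H.subgroupOf K).normalCore :=
        (QuotientGroup.mk' _).comp φ with hψdef
      have hφcoe : ∀ x : ↥(K.comap f), ((φ x : ↥K) : G) = f ↑x := fun _ => rfl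
      have hkerS : ψ.ker ≤ (H.comap f).subgroupOf (K.comap f) := by
        intro x hx
        have hx' : φ x ∈ (H.subgroupOf K).normalCore := by
          rwa [hψdef, MonoidHom.mem_ker, MonoidHom.comp_apply, ← MonoidHom.mem_ker,
            QuotientGroup.ker_mk'] at hx
        have hxH : ((φ x : ↥K) : G) ∈ H :=
          Subgroup.mem_subgroupOf.mp (Subgroup.normalCore_le _ hx')
        rw [Subgroup.mem_subgroupOf, Subgroup.mem_comap]
        rwa [hφcoe] at hxH
      have hkerC : ψ.ker ≤ ((H.comap f).subgroupOf (K.comap f)).normalCore :=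
        Subgroup.normal_le_normalCore.mpr hkerS
      have hNdvd : (((H.comap f).subgroupOf (K.comap f)).normalCore).index ∣ p * q ^ n := by
        have h1 := Subgroup.index_dvd_of_le hkerC
        have h2 : ψ.ker.index = Nat.card ψ.range := Subgroup.index_ker ψ
        have h3 : Nat.card ψ.range ∣ Nat.card (↥K ⧸ (H.subgroupOf K).normalCore) :=
          Subgroup.card_subgroup_dvd_card _
        rw [hcard] at h3
        exact h1.trans (h2 ▸ h3)
      have hpq : p ≠ q := by
        rintro rfl
        haveI := Fact.mk hp
        exact hnonnil (IsPGroup.isNilpotent (IsPGroup.of_card (by rw [hcard, ← pow_succ'])))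
      obtain ⟨b, hbn, hbcase⟩ := KSub.dvd_decomp hp hq hNdvd
      have hNval : (((H.comap f).subgroupOf (K.comap f)).normalCore).index = p * q ^ b := by
        rcases hbcase with h1 | h2
        · exfalso
          apply hnn
          haveI := Fact.mk hq
          exact IsPGroup.isNilpotent (IsPGroup.of_card (by rw [← Subgroup.index_eq_card, h1]))
        · exact h2
      have hb0 : 0 < b := by
        rcases Nat.eq_zero_or_pos b with rfl | hb
        · exfalso
          apply hnn
          haveI := Fact.mk hp
          refine IsPGroup.isNilpotent (IsPGroup.of_card (p := p) (n := 1) ?_)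
          rw [← Subgroup.index_eq_card, hNval, pow_zero, mul_one, pow_one]
        · exact hb
      have hddvd : ((H.comap f).subgroupOf (K.comap f)).index ∣ p * q ^ b :=
        hNval ▸ Subgroup.index_dvd_of_le (Subgroup.normalCore_le _)
      have hdle : ((H.comap f).subgroupOf (K.comap f)).index ≤ p := by
        have hcomp : (H.comap f).subgroupOf (K.comap f)
            = H.comap (f.comp (K.comap f).subtype) := by
          rw [← Subgroup.comap_comap]
          rfl
        have hrange_le : (f.comp (K.comap f).subtype).range ≤ K := by
          rintro x ⟨y, rfl⟩
          exact y.2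
        rw [hcomp, Subgroup.index_comap, ← hindex]
        exact Subgroup.relIndex_le_of_le_right hrange_le Subgroup.index_ne_zero_of_finite
      have hrel : ψ.ker.relIndex ((H.comap f).subgroupOf (K.comap f)) ∣ q ^ n := by
        set Hb := (H.subgroupOf K).map (QuotientGroup.mk' (H.subgroupOf K).normalCore)
          with hHbdef
        have hHbindex : Hb.index = p := by
          rw [hHbdef, Subgroup.index_map, QuotientGroup.ker_mk',
            sup_eq_left.mpr (Subgroup.normalCore_le _),
            MonoidHom.range_eq_top_of_surjective _ (QuotientGroup.mk'_surjective _),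
            Subgroup.index_top, mul_one, hindex]
        have hHbcard : Nat.card Hb = q ^ n := by
          have h2 := Subgroup.card_mul_index Hb
          rw [hHbindex, hcard] at h2
          have h3 : p * Nat.card Hb = p * q ^ n := by rw [mul_comm] at h2; exact h2
          exact Nat.eq_of_mul_eq_mul_left hp.pos h3
        set χ := ψ.comp ((H.comap f).subgroupOf (K.comap f)).subtype with hχdef
        have hχker : χ.ker = ψ.ker.subgroupOf ((H.comap f).subgroupOf (K.comap f)) := by
          rw [hχdef, ← MonoidHom.comap_ker]
          rfl
        have hχrange : χ.range ≤ Hb := by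
          rintro x ⟨y, rfl⟩
          have hy : φ ↑y ∈ H.subgroupOf K := by
            rw [Subgroup.mem_subgroupOf]
            rw [hφcoe]
            have := y.2
            rw [Subgroup.mem_subgroupOf, Subgroup.mem_comap] at this
            exact this
          exact ⟨φ ↑y, hy, rfl⟩
        have h4 : ψ.ker.relIndex ((H.comap f).subgroupOf (K.comap f)) = χ.ker.index := by
          rw [hχker]
          rfl
        rw [h4, Subgroup.index_ker, ← hHbcard]
        exact Subgroup.card_dvd_of_le hχrange
      have hpd : p ∣ ((H.comap f).subgroupOf (K.comap f)).index := by
        by_contra hpd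
        have hpk : p ∣ ψ.ker.index := by
          have h1 : p ∣ (((H.comap f).subgroupOf (K.comap f)).normalCore).index :=
            Dvd.intro _ hNval.symm
          exact h1.trans (Subgroup.index_dvd_of_le hkerC)
        rw [← Subgroup.relIndex_mul_index hkerS] at hpk
        rcases (Nat.Prime.dvd_mul hp).mp hpk with h1 | h1
        · have h2 : p ∣ q ^ n := h1.trans hrel
          exact hpq ((Nat.prime_dvd_prime_iff_eq hp hq).mp (hp.dvd_of_dvd_pow h2))
        · exact hpd h1
      have hdp : ((H.comap f).subgroupOf (K.comap f)).index = p := by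
        obtain ⟨j, hj, hcase⟩ := KSub.dvd_decomp hp hq hddvd
        rcases hcase with he | he
        · exfalso
          rw [he] at hpd
          exact hpq ((Nat.prime_dvd_prime_iff_eq hp hq).mp (hp.dvd_of_dvd_pow hpd))
        · rw [he] at hdle ⊢
          have hqj : q ^ j = 1 := by
            by_contra hq1
            have h2 : 2 ≤ q ^ j := by
              have h3 : 1 ≤ q ^ j := Nat.one_le_pow _ _ hq.pos
              omega
            have h4 : p * 2 ≤ p * q ^ j := Nat.mul_le_mul_left p h2
            have := hp.pos
            omega
          rw [hqj, mul_one]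
      refine KSub.single hb0 (hbn.trans hnk) ⟨hHK', Or.inr ⟨p, q, hp, hq, hnn, ?_, hdp⟩⟩
      rw [← Subgroup.index_eq_card]
      exact hNval

theorem KSub.comap {G G' : Type*} [Group G] [Group G'] [Finite G] [Finite G']
    {k : ℕ} (hk : 0 < k) (f : G' →* G) (hf : Function.Injective f)
    {H K : Subgroup G} (h : KSubmodularIn k H K) :
    KSubmodularIn k (H.comap f) (K.comap f) := by
  obtain ⟨m, c, h0, h1, hs⟩ := h
  have key : ∀ m', m' ≤ m → KSubmodularIn k ((c 0).comap f) ((c m').comap f) := by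
    intro m'
    induction m' with
    | zero => intro _; exact KSub.refl _ _
    | succ i ih =>
      intro hle
      obtain ⟨nn, hn0, hnk', hme⟩ := hs i (by omega)
      exact KSub.trans (ih (by omega)) (KSub.me_comap hn0 hnk' f hf hme)
  rw [← h0, ← h1]
  exact key m le_rfl

end Aux

/-- Lemma 3.9(5): the class of groups with all Sylow subgroups `k`-submodular
is closed under subgroups. -/
theorem sylow_kSubmodular_subgroup {G : Type*} [Group G] [Finite G]
    {k : ℕ} (hk : 0 < k)
    (hG : ∀ (p : ℕ) (P : Sylow p G), KSubmodularIn k (P : Subgroup G) ⊤)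
    (U : Subgroup G) :
    ∀ (p : ℕ) (P : Sylow p ↥U), KSubmodularIn k (P : Subgroup ↥U) ⊤ := by
  intro p P
  obtain ⟨Q, hQ⟩ := Sylow.exists_comap_subtype_eq P
  have h1 := KSub.comap hk U.subtype (Subgroup.subtype_injective U) (hG p Q)
  rw [Subgroup.comap_top] at h1
  have h2 : (Q : Subgroup G).comap U.subtype = (P : Subgroup ↥U) := by
    rw [← hQ]
  rwa [h2] at h1
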